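/- arXiv:2309.06862 — 2 statements merged into one kernel-verified Lean document; each statement's English description precedes it below -/
import Mathlib

section
/- Let M ≥ 1, let x₁,…,x_M ∈ ℝ³, let ρ₁,…,ρ_M > 0 and let r₀ ≥ 0. Set Ω_SAS = ⋃_{i=1}^M closedBall(xᵢ, ρᵢ) and let f_SAS be the signed distance function to Ω_SAS. Then the enlarged cavity {x ∈ ℝ³ : f_SAS(x) ≤ r₀} is exactly the union of the enlarged balls: {x ∈ ℝ³ : f_SAS(x) ≤ r₀} = ⋃_{i=1}^M closedBall(xᵢ, ρᵢ + r₀). -/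
/-! Outside `Ω` the signed distance is just `infDist · Ω`, and inside it is `≤ 0`, so for
`r₀ ≥ 0` the sublevel set `{f ≤ r₀}` is the closed thickening of `Ω` by `r₀`. Closed
thickening commutes with finite unions and turns `closedBall x ρ` into `closedBall x (ρ + r₀)`. -/

open Set Metric

namespace Metric

variable {α : Type*} [PseudoMetricSpace α]

theorem infDist_sub_infDist_compl_le_iff {s : Set α} {r : ℝ} (hr : 0 ≤ r) (y : α) :
    infDist y s - infDist y sᶜ ≤ r ↔ infDist y s ≤ r := by
  by_cases hy : y ∈ s
  · have hcompl : 0 ≤ infDist y sᶜ := infDist_nonneg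
    simp only [infDist_zero_of_mem hy]
    constructor <;> intro <;> linarith
  · rw [infDist_zero_of_mem (mem_compl hy), sub_zero]

theorem mem_cthickening_iff_infDist_le {s : Set α} (hs : s.Nonempty) {δ : ℝ} (hδ : 0 ≤ δ)
    {y : α} : y ∈ cthickening δ s ↔ infDist y s ≤ δ := by
  rw [mem_cthickening_iff, infDist, ENNReal.le_ofReal_iff_toReal_le (infEDist_ne_top hs) hδ]

theorem cthickening_iUnion_of_finite {ι : Type*} [Finite ι] (δ : ℝ) (s : ι → Set α) :
    cthickening δ (⋃ i, s i) = ⋃ i, cthickening δ (s i) := by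
  have := Fintype.ofFinite ι
  ext y
  simp only [mem_cthickening_iff, infEDist_iUnion, mem_iUnion, ← Finset.inf_univ_eq_iInf,
    Finset.inf_le_iff ENNReal.ofReal_lt_top, Finset.mem_univ, true_and]

end Metric

/-- For the SAS cavity `Ω = ⋃ᵢ closedBall (xᵢ) ρᵢ` (with `ρᵢ > 0`) and the
signed distance function `f y = infDist y Ω - infDist y Ωᶜ`, the enlarged cavity
`{y : f y ≤ r₀}` (with `r₀ ≥ 0`) is exactly the union of the enlarged balls. -/
theorem enlarged_cavity_eq_union_enlarged_balls
    (M : ℕ) (hM : 1 ≤ M)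
    (x : Fin M → EuclideanSpace ℝ (Fin 3))
    (ρ : Fin M → ℝ) (hρ : ∀ i, 0 < ρ i)
    (r₀ : ℝ) (hr₀ : 0 ≤ r₀)
    (Ω : Set (EuclideanSpace ℝ (Fin 3)))
    (hΩ : Ω = ⋃ i, Metric.closedBall (x i) (ρ i))
    (f : EuclideanSpace ℝ (Fin 3) → ℝ)
    (hf : ∀ y, f y = Metric.infDist y Ω - Metric.infDist y Ωᶜ) :
    {y : EuclideanSpace ℝ (Fin 3) | f y ≤ r₀}
      = ⋃ i, Metric.closedBall (x i) (ρ i + r₀) := by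
  have hΩne : Ω.Nonempty :=
    ⟨x ⟨0, hM⟩, hΩ ▸ mem_iUnion.2 ⟨⟨0, hM⟩, mem_closedBall_self (hρ _).le⟩⟩
  ext y
  rw [mem_ofPred_eq, hf, infDist_sub_infDist_compl_le_iff hr₀,
    ← mem_cthickening_iff_infDist_le hΩne hr₀, hΩ, cthickening_iUnion_of_finite]
  simp only [cthickening_closedBall hr₀ (hρ _).le, add_comm r₀]
end

section
/- Let E be a real normed vector space and let S ⊆ E be a set such that both S and its complement Sᶜ are nonempty. Then the signed distance function f_S(x) = dist(x, S) − dist(x, Sᶜ) is 1-Lipschitz: for all x, y ∈ E, |f_S(x) − f_S(y)| ≤ ‖x − y‖. -/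
open Metric Set

/-- Key one-sided estimate for the signed distance function. -/
lemma signedDist_sub_le
    {E : Type*} [NormedAddCommGroup E] [NormedSpace ℝ E]
    (S : Set E) (hS : S.Nonempty) (hSc : Sᶜ.Nonempty) (x y : E) :
    (infDist x S - infDist x Sᶜ) - (infDist y S - infDist y Sᶜ) ≤ dist x y := by
  have hxmem : x ∈ closure S ∪ closure Sᶜ := by
    have : x ∈ S ∪ Sᶜ := by simp
    exact this.imp (fun h => subset_closure h) (fun h => subset_closure h)
  have hymem : y ∈ closure S ∪ closure Sᶜ := by
    have : y ∈ S ∪ Sᶜ := by simp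
    exact this.imp (fun h => subset_closure h) (fun h => subset_closure h)
  have dzero : ∀ (z : E) (T : Set E), z ∈ closure T → infDist z T = 0 := by
    intro z T hz
    rw [← Metric.infDist_closure]
    exact Metric.infDist_zero_of_mem hz
  rcases hxmem with hx | hx
  · rcases hymem with hy | hy
    · -- both in closure S
      rw [dzero x S hx, dzero y S hy]
      have h1 : infDist y Sᶜ ≤ infDist x Sᶜ + dist y x :=
        Metric.infDist_le_infDist_add_dist
      rw [dist_comm y x] at h1
      have : dist x y ≥ 0 := dist_nonneg
      linarith
    · -- x ∈ closure S, y ∈ closure Sᶜ : LHS ≤ 0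
      rw [dzero x S hx, dzero y Sᶜ hy]
      have h1 : 0 ≤ infDist x Sᶜ := Metric.infDist_nonneg
      have h2 : 0 ≤ infDist y S := Metric.infDist_nonneg
      have : dist x y ≥ 0 := dist_nonneg
      linarith
  · rcases hymem with hy | hy
    · -- x ∈ closure Sᶜ, y ∈ closure S : hard case, uses the segment
      rw [dzero x Sᶜ hx, dzero y S hy]
      -- find a point of the frontier on the segment [x, y]
      obtain ⟨z, hzseg, hzS, hzSc⟩ :
          ∃ z, z ∈ segment ℝ x y ∧ z ∈ closure S ∧ z ∈ closure Sᶜ := by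
        have hconn : IsPreconnected (segment ℝ x y) :=
          (convex_segment x y).isPreconnected
        have h := isPreconnected_closed_iff.1 hconn (closure S) (closure Sᶜ)
          isClosed_closure isClosed_closure
          (by
            intro z _
            have : z ∈ S ∪ Sᶜ := by simp
            exact this.imp (fun h => subset_closure h) (fun h => subset_closure h))
          ⟨y, right_mem_segment ℝ x y, hy⟩
          ⟨x, left_mem_segment ℝ x y, hx⟩
        obtain ⟨z, hz1, hz2, hz3⟩ := h
        exact ⟨z, hz1, hz2, hz3⟩
      have h1 : infDist x S ≤ dist x z := by
        rw [← Metric.infDist_closure]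
        exact Metric.infDist_le_dist_of_mem hzS
      have h2 : infDist y Sᶜ ≤ dist y z := by
        rw [← Metric.infDist_closure]
        exact Metric.infDist_le_dist_of_mem hzSc
      have h3 : dist x z + dist z y = dist x y := dist_add_dist_of_mem_segment hzseg
      rw [dist_comm y z] at h2
      linarith
    · -- both in closure Sᶜ
      rw [dzero x Sᶜ hx, dzero y Sᶜ hy]
      have h1 : infDist x S ≤ infDist y S + dist x y :=
        Metric.infDist_le_infDist_add_dist
      linarith

/-- In a real normed vector space, if `S` and `Sᶜ` are both nonempty, then the
signed distance function `f_S x = dist(x, S) - dist(x, Sᶜ)` is 1-Lipschitz: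
`|f_S x - f_S y| ≤ ‖x - y‖` for all `x, y`. -/
theorem signedDist_one_lipschitz
    {E : Type*} [NormedAddCommGroup E] [NormedSpace ℝ E]
    (S : Set E) (hS : S.Nonempty) (hSc : Sᶜ.Nonempty)
    (f : E → ℝ) (hf : ∀ x, f x = Metric.infDist x S - Metric.infDist x Sᶜ) :
    ∀ x y : E, |f x - f y| ≤ ‖x - y‖ := by
  intro x y
  rw [hf x, hf y, ← dist_eq_norm]
  rw [abs_sub_le_iff]
  constructor
  · exact signedDist_sub_le S hS hSc x y
  · have := signedDist_sub_le S hS hSc y x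
    rwa [dist_comm y x] at this
end
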